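/- (Proposition 4.2) Let N ≥ 2 and let q ∈ ℂ^N have pairwise distinct entries. (i) For fixed z_1, z_2 with z_1, z_2, z_1−z_2 nonzero, the matrix-valued function ℏ ↦ ℏ·E(ℏ, z_1, z_2; q) tends to 1_N ⊗ 1_N as ℏ → 0 (through admissible values). (ii) For fixed ℏ, z_2 with ℏ, z_2, z_2+ℏ nonzero, the matrix-valued function z_1 ↦ (z_1−z_2)·E(ℏ, z_1, z_2; q) tends to the permutation operator P_{12} as z_1 → z_2 (through admissible values). -/

import Mathlib

open Matrix Finset
open scoped Kronecker

noncomputable section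

/-- `ρ(i)`: in 1-based terms ρ(i) = i−1 for 1 ≤ i ≤ N−1 and ρ(N) = N. -/
def rho (N : ℕ) (i : Fin N) : ℕ := if (i : ℕ) = N - 1 then N else (i : ℕ)

/-- `q̄_j = q_j − (1/N)·Σ_k q_k`. -/
def qbar (N : ℕ) (q : Fin N → ℂ) (j : Fin N) : ℂ := q j - (∑ k, q k) / N

/-- The generalized Vandermonde matrix `Ξ(z,q)` with entries `(z + q̄_j)^{ρ(i)}`. -/
def Xi (N : ℕ) (z : ℂ) (q : Fin N → ℂ) : Matrix (Fin N) (Fin N) ℂ :=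
  Matrix.of fun i j => (z + qbar N q j) ^ rho N i

/-- The diagonal matrix `D(q)` with `D_{ii}(q) = ∏_{k≠i}(q_i − q_k)`. -/
def Dmat (N : ℕ) (q : Fin N → ℂ) : Matrix (Fin N) (Fin N) ℂ :=
  Matrix.diagonal fun i => ∏ k ∈ Finset.univ.erase i, (q i - q k)

/-- The IRF-Vertex transformation matrix `g(z,q) = Ξ(z,q)·D(q)⁻¹`. -/
def gmat (N : ℕ) (z : ℂ) (q : Fin N → ℂ) : Matrix (Fin N) (Fin N) ℂ :=
  Xi N z q * (Dmat N q)⁻¹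

/-- The matrix unit `E_{ij}`. -/
def Eu (N : ℕ) (i j : Fin N) : Matrix (Fin N) (Fin N) ℂ := Matrix.single i j 1

/-- The permutation operator `P_{12} = Σ_{i,j} E_{ij} ⊗ E_{ji}`. -/
def Pmat (N : ℕ) : Matrix (Fin N × Fin N) (Fin N × Fin N) ℂ :=
  ∑ i, ∑ j, Eu N i j ⊗ₖ Eu N j i

/-- The semi-dynamical rational GL_N R-matrix `R^{sd}(ℏ,z_1,z_2|q)`. -/
def Rsd (N : ℕ) (hb z1 z2 : ℂ) (q : Fin N → ℂ) : Matrix (Fin N × Fin N) (Fin N × Fin N) ℂ :=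
  (∑ i, ∑ j ∈ Finset.univ.erase i, (1/(z1 - z2) + (N : ℂ)/(q j - q i)) • (Eu N i j ⊗ₖ Eu N j i))
  + (∑ i, ∑ j ∈ Finset.univ.erase i, (1/hb + (N : ℂ)/(q j - q i)) • (Eu N i i ⊗ₖ Eu N j j))
  - (∑ i, ∑ j ∈ Finset.univ.erase i, (1/(z1 + hb) + (N : ℂ)/(q j - q i)) • (Eu N i j ⊗ₖ Eu N j j))
  + (∑ i, ∑ j ∈ Finset.univ.erase i, (1/z2 + (N : ℂ)/(q j - q i)) • (Eu N j j ⊗ₖ Eu N i j))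
  + (1/(z1 - z2) + 1/z2 + 1/hb - 1/(z1 + hb)) • ∑ i, Eu N i i ⊗ₖ Eu N i i

/-- Admissibility of the data `(ℏ, z_1, z_2, q)`: the entries of `q` are pairwise distinct and
`ℏ, z_1, z_2, z_1−z_2, z_1+ℏ, z_2+ℏ` are all nonzero. -/
def Admissible (N : ℕ) (hb z1 z2 : ℂ) (q : Fin N → ℂ) : Prop :=
  Function.Injective q ∧ hb ≠ 0 ∧ z1 ≠ 0 ∧ z2 ≠ 0 ∧ z1 - z2 ≠ 0 ∧ z1 + hb ≠ 0 ∧ z2 + hb ≠ 0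

/-- The gauge-transformed (vertex-type) R-matrix
`E(ℏ,z_1,z_2;q) = (1⊗g(z_2,q))·(g(z_1+ℏ,q)⊗1)·R^{sd}(ℏ,z_1,z_2|q)·(1⊗g(z_2+ℏ,q)⁻¹)·(g(z_1,q)⁻¹⊗1)`. -/
def Evtx (N : ℕ) (hb z1 z2 : ℂ) (q : Fin N → ℂ) : Matrix (Fin N × Fin N) (Fin N × Fin N) ℂ :=
  ((1 : Matrix (Fin N) (Fin N) ℂ) ⊗ₖ gmat N z2 q)
  * (gmat N (z1 + hb) q ⊗ₖ (1 : Matrix (Fin N) (Fin N) ℂ))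
  * Rsd N hb z1 z2 q
  * ((1 : Matrix (Fin N) (Fin N) ℂ) ⊗ₖ (gmat N (z2 + hb) q)⁻¹)
  * ((gmat N z1 q)⁻¹ ⊗ₖ (1 : Matrix (Fin N) (Fin N) ℂ))

/-!
Near `ℏ = 0` and near `z₁ = z₂` the matrix `R^{sd}` is `ℏ⁻¹ (1 ⊗ 1) + (z₁ - z₂)⁻¹ P₁₂` plus a
regular part, so its residues there are `1 ⊗ 1` and `P₁₂`. The gauge factors are continuous, and
`g(z, q)` is invertible for `z ≠ 0`: a polynomial `∑ᵢ vᵢ X ^ ρ(i)` vanishing at the `N` distinct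
points `z + q̄ⱼ` is a multiple `c ∏ⱼ (X - z - q̄ⱼ)`, and comparing `X ^ (N - 1)` coefficients gives
`0 = -c N z`. At the limit point the gauge factors cancel, directly against `1 ⊗ 1`, and against
`P₁₂` after using `(A ⊗ B) P₁₂ = P₁₂ (B ⊗ A)`.
-/

open Polynomial Filter Topology

lemma rho_le {N : ℕ} (i : Fin N) : rho N i ≤ N := by
  unfold rho; split <;> omega

lemma rho_ne_pred {N : ℕ} (i : Fin N) : rho N i ≠ N - 1 := by
  unfold rho; split <;> omega

lemma rho_injective (N : ℕ) : Function.Injective (rho N) := by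
  intro a b hab
  unfold rho at hab
  ext
  split at hab <;> split at hab <;> omega

lemma Polynomial.eq_zero_of_eval_eq_zero_of_coeff_pred_eq_zero {K : Type*} [Field K] {N : ℕ}
    {x : Fin N → K} (hx : Function.Injective x) (hsum : ∑ j, x j ≠ 0) {p : K[X]}
    (hdeg : p.natDegree ≤ N) (hcoeff : p.coeff (N - 1) = 0) (hroot : ∀ j, p.eval (x j) = 0) :
    p = 0 := by
  have hN : 0 < N := Nat.pos_of_ne_zero fun h => hsum (by subst h; simp)
  set W : K[X] := ∏ j, (X - C (x j))
  have hWmonic : W.Monic := monic_prod_of_monic _ _ fun j _ => monic_X_sub_C (x j)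
  have hWdeg : W.natDegree = N := by simp [W]
  have hW : W.coeff (N - 1) = -∑ j, x j := by
    simpa using prod_X_sub_C_coeff_card_pred Finset.univ x (by simpa using hN)
  have hp : p = C (p.coeff N) * W := by
    set r := p - C (p.coeff N) * W
    have hr : r.natDegree ≤ N := max_self N ▸ natDegree_sub_le_of_le hdeg
      ((natDegree_C_mul_le _ _).trans hWdeg.le)
    have hrN : r.coeff N = 0 := by
      simp [r, ← hWdeg, hWmonic.coeff_natDegree]
    refine sub_eq_zero.mp (eq_zero_of_natDegree_lt_card_of_eval_eq_zero r hx (fun j => ?_) ?_)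
    · simp [r, W, hroot, eval_prod, Finset.prod_eq_zero (Finset.mem_univ j)]
    · simpa using (natDegree_le_pred hr hrN).trans_lt (Nat.sub_lt hN one_pos)
  have hc : p.coeff N = 0 := by
    have := hcoeff
    rw [hp, coeff_C_mul, hW] at this
    simpa [hsum] using this
  rw [hp, hc, C_0, zero_mul]

lemma det_of_pow_rho_ne_zero {K : Type*} [Field K] {N : ℕ} {x : Fin N → K}
    (hx : Function.Injective x) (hsum : ∑ j, x j ≠ 0) :
    (Matrix.of fun i j => x j ^ rho N i).det ≠ 0 := by
  intro hdet
  obtain ⟨v, hv, hvx⟩ := Matrix.exists_vecMul_eq_zero_iff.mpr hdet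
  set p : K[X] := ∑ i, C (v i) * X ^ rho N i
  have hcoeff : ∀ n, p.coeff n = ∑ i, if n = rho N i then v i else 0 := by
    intro n; simp [p, coeff_C_mul, coeff_X_pow]
  have hp : p = 0 := by
    refine eq_zero_of_eval_eq_zero_of_coeff_pred_eq_zero hx hsum ?_ ?_ fun j => ?_
    · exact natDegree_sum_le_of_forall_le _ _ fun i _ =>
        (natDegree_C_mul_X_pow_le _ _).trans (rho_le i)
    · simp [hcoeff, Ne.symm (rho_ne_pred _)]
    · simpa [p, eval_finsetSum, Matrix.vecMul, dotProduct] using congrFun hvx j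
  refine hv (funext fun k => ?_)
  simpa [hcoeff, hp, (rho_injective N).eq_iff] using (hcoeff (rho N k)).symm

lemma sum_add_qbar {N : ℕ} (hN : N ≠ 0) (z : ℂ) (q : Fin N → ℂ) :
    ∑ j, (z + qbar N q j) = N * z := by
  simp only [qbar, Finset.sum_add_distrib, Finset.sum_sub_distrib, Finset.sum_const,
    Finset.card_univ, Fintype.card_fin, nsmul_eq_mul]
  field_simp
  ring

lemma det_Xi_ne_zero {N : ℕ} (hN : N ≠ 0) {z : ℂ} (hz : z ≠ 0) {q : Fin N → ℂ}
    (hq : Function.Injective q) : (Xi N z q).det ≠ 0 := by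
  refine det_of_pow_rho_ne_zero (fun a b hab => hq ?_) ?_
  · simpa [qbar] using hab
  · rw [sum_add_qbar hN]
    exact mul_ne_zero (Nat.cast_ne_zero.mpr hN) hz

lemma det_Dmat_ne_zero {N : ℕ} {q : Fin N → ℂ} (hq : Function.Injective q) :
    (Dmat N q).det ≠ 0 := by
  simpa [Dmat, Finset.prod_eq_zero_iff, sub_eq_zero] using fun i k hki => hq.ne (Ne.symm hki)

lemma isUnit_det_gmat {N : ℕ} (hN : N ≠ 0) {z : ℂ} (hz : z ≠ 0) {q : Fin N → ℂ}
    (hq : Function.Injective q) : IsUnit (gmat N z q).det := by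
  rw [gmat, Matrix.det_mul, Matrix.det_nonsing_inv, Ring.inverse_eq_inv']
  exact isUnit_iff_ne_zero.mpr (mul_ne_zero (det_Xi_ne_zero hN hz hq)
    (inv_ne_zero (det_Dmat_ne_zero hq)))

lemma continuous_gmat (N : ℕ) (q : Fin N → ℂ) : Continuous fun z => gmat N z q := by
  refine Continuous.matrix_mul (continuous_matrix fun i j => ?_) continuous_const
  exact (continuous_id.add continuous_const).pow _

lemma continuousAt_gmat_inv {N : ℕ} (hN : N ≠ 0) {z : ℂ} (hz : z ≠ 0) {q : Fin N → ℂ}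
    (hq : Function.Injective q) : ContinuousAt (fun z => (gmat N z q)⁻¹) z := by
  refine (continuousAt_matrix_inv _ ?_).comp (continuous_gmat N q).continuousAt
  rw [Ring.inverse_eq_inv']
  exact continuousAt_inv₀ (isUnit_det_gmat hN hz hq).ne_zero

lemma Pmat_apply {N : ℕ} (a b c d : Fin N) :
    Pmat N (a, b) (c, d) = if a = d ∧ b = c then 1 else 0 := by
  simp [Pmat, Eu, Matrix.sum_apply, Matrix.single_apply, ite_and, Finset.sum_ite_eq,
    eq_comm]

lemma sum_sum_Eu_kronecker_Eu {N : ℕ} : ∑ i, ∑ j, Eu N i i ⊗ₖ Eu N j j = 1 ⊗ₖ 1 := by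
  ext ⟨a, b⟩ ⟨c, d⟩
  simp [Eu, Matrix.sum_apply, Matrix.single_apply, Matrix.one_apply, ite_and, Finset.sum_ite_eq,
    eq_comm]

lemma kronecker_mul_Pmat {N : ℕ} (A B : Matrix (Fin N) (Fin N) ℂ) :
    (A ⊗ₖ B) * Pmat N = Pmat N * (B ⊗ₖ A) := by
  ext ⟨a, b⟩ ⟨c, d⟩
  simp [Matrix.mul_apply, Pmat_apply, Fintype.sum_prod_type, ite_and, mul_comm]

lemma Finset.sum_sum_eq_sum_sum_erase_add {M : Type*} [AddCommMonoid M] {ι : Type*} [Fintype ι]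
    [DecidableEq ι] (f : ι → ι → M) :
    ∑ i, ∑ j, f i j = ∑ i, ∑ j ∈ univ.erase i, f i j + ∑ i, f i i := by
  rw [← Finset.sum_add_distrib]
  exact Finset.sum_congr rfl fun i _ => (Finset.sum_erase_add _ _ (Finset.mem_univ i)).symm

def RsdRegular (N : ℕ) (w z2 : ℂ) (q : Fin N → ℂ) : Matrix (Fin N × Fin N) (Fin N × Fin N) ℂ :=
  -w⁻¹ • ∑ i, ∑ j, Eu N i j ⊗ₖ Eu N j j + z2⁻¹ • ∑ i, ∑ j, Eu N j j ⊗ₖ Eu N i j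
  + ∑ i, ∑ j ∈ univ.erase i, ((N : ℂ) / (q j - q i)) •
      (Eu N i j ⊗ₖ Eu N j i + Eu N i i ⊗ₖ Eu N j j - Eu N i j ⊗ₖ Eu N j j + Eu N j j ⊗ₖ Eu N i j)

lemma Rsd_eq (N : ℕ) (hb z1 z2 : ℂ) (q : Fin N → ℂ) :
    Rsd N hb z1 z2 q = hb⁻¹ • (1 ⊗ₖ 1) + (z1 - z2)⁻¹ • Pmat N + RsdRegular N (z1 + hb) z2 q := by
  rw [RsdRegular, Pmat, ← sum_sum_Eu_kronecker_Eu, Finset.sum_sum_eq_sum_sum_erase_add,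
    Finset.sum_sum_eq_sum_sum_erase_add, Finset.sum_sum_eq_sum_sum_erase_add,
    Finset.sum_sum_eq_sum_sum_erase_add, Rsd]
  simp only [add_smul, sub_smul, neg_smul, smul_add, smul_sub, Finset.smul_sum,
    Finset.sum_neg_distrib, Finset.sum_add_distrib, Finset.sum_sub_distrib, one_div]
  abel

lemma continuousAt_RsdRegular (N : ℕ) {w : ℂ} (hw : w ≠ 0) (z2 : ℂ) (q : Fin N → ℂ) :
    ContinuousAt (fun w => RsdRegular N w z2 q) w := by
  unfold RsdRegular
  fun_prop (disch := exact hw)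

lemma tendsto_sub_smul_of_eq_inv_smul_add {𝕜 E : Type*} [NormedField 𝕜] [AddCommGroup E]
    [Module 𝕜 E] [TopologicalSpace E] [ContinuousAdd E] [ContinuousSMul 𝕜 E] {f F : 𝕜 → E}
    {a : 𝕜} {M : E}
    (hf : ∀ t, f t = (t - a)⁻¹ • M + F t) (hF : ContinuousAt F a) :
    Tendsto (fun t => (t - a) • f t) (𝓝[≠] a) (𝓝 M) := by
  have hlim : Tendsto (fun t => M + (t - a) • F t) (𝓝 a) (𝓝 M) := by
    simpa using tendsto_const_nhds.add (((continuous_sub_right a).tendsto a).smul hF)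
  refine (hlim.mono_left nhdsWithin_le_nhds).congr' ?_
  filter_upwards [self_mem_nhdsWithin] with t ht
  rw [hf, smul_add, smul_smul, mul_inv_cancel₀ (sub_ne_zero.mpr ht), one_smul]

lemma Filter.Tendsto.kronecker {α m n p r R : Type*} [Mul R] [TopologicalSpace R] [ContinuousMul R]
    {l : Filter α} {A : α → Matrix m n R} {B : α → Matrix p r R} {A₀ : Matrix m n R}
    {B₀ : Matrix p r R} (hA : Tendsto A l (𝓝 A₀)) (hB : Tendsto B l (𝓝 B₀)) :
    Tendsto (fun x => A x ⊗ₖ B x) l (𝓝 (A₀ ⊗ₖ B₀)) :=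
  tendsto_pi_nhds.2 fun i => tendsto_pi_nhds.2 fun j =>
    (tendsto_pi_nhds.1 (tendsto_pi_nhds.1 hA i.1) j.1).mul
      (tendsto_pi_nhds.1 (tendsto_pi_nhds.1 hB i.2) j.2)

lemma smul_Evtx (N : ℕ) (c hb z1 z2 : ℂ) (q : Fin N → ℂ) :
    c • Evtx N hb z1 z2 q = (gmat N (z1 + hb) q ⊗ₖ gmat N z2 q) * (c • Rsd N hb z1 z2 q)
      * ((gmat N z1 q)⁻¹ ⊗ₖ (gmat N (z2 + hb) q)⁻¹) := by
  simp only [Evtx, Matrix.mul_assoc, ← Matrix.mul_kronecker_mul, Matrix.one_mul, Matrix.mul_one,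
    Matrix.mul_smul, Matrix.smul_mul]

lemma tendsto_const_add_nhds_zero {M : Type*} [AddZeroClass M] [TopologicalSpace M]
    [ContinuousAdd M] (a : M) : Tendsto (a + ·) (𝓝 0) (𝓝 a) := by
  simpa using (continuous_const_add a).tendsto 0

section GaugeLimits

variable {N : ℕ} {q : Fin N → ℂ}

lemma gmat_kronecker_mul_inv {z w : ℂ} (hN : N ≠ 0) (hq : Function.Injective q) (hz : z ≠ 0)
    (hw : w ≠ 0) : (gmat N z q ⊗ₖ gmat N w q) * ((gmat N z q)⁻¹ ⊗ₖ (gmat N w q)⁻¹) = 1 := by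
  rw [← Matrix.mul_kronecker_mul, Matrix.mul_nonsing_inv _ (isUnit_det_gmat hN hz hq),
    Matrix.mul_nonsing_inv _ (isUnit_det_gmat hN hw hq), Matrix.one_kronecker_one]

lemma tendsto_smul_Evtx_nhdsNE_zero (hN : N ≠ 0) (hq : Function.Injective q) {z1 z2 : ℂ}
    (hz1 : z1 ≠ 0) (hz2 : z2 ≠ 0) :
    Tendsto (fun h => h • Evtx N h z1 z2 q) (𝓝[≠] 0) (𝓝 (1 ⊗ₖ 1)) := by
  have hR : Tendsto (fun h => h • Rsd N h z1 z2 q) (𝓝[≠] 0) (𝓝 (1 ⊗ₖ 1)) := by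
    have := tendsto_sub_smul_of_eq_inv_smul_add (f := fun h => Rsd N h z1 z2 q) (a := 0)
      (F := fun h => (z1 - z2)⁻¹ • Pmat N + RsdRegular N (z1 + h) z2 q)
      (fun h => by rw [Rsd_eq, sub_zero, add_assoc])
      (continuousAt_const.add <| (continuousAt_RsdRegular N (by simpa) z2 q).comp
        (continuous_const_add z1).continuousAt)
    simpa only [sub_zero] using this
  have hgL : Tendsto (fun h => gmat N (z1 + h) q ⊗ₖ gmat N z2 q) (𝓝[≠] 0)
      (𝓝 (gmat N z1 q ⊗ₖ gmat N z2 q)) :=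
    Tendsto.kronecker (tendsto_nhdsWithin_of_tendsto_nhds <|
      ((continuous_gmat N q).tendsto z1).comp (tendsto_const_add_nhds_zero z1)) tendsto_const_nhds
  have hgR : Tendsto (fun h => (gmat N z1 q)⁻¹ ⊗ₖ (gmat N (z2 + h) q)⁻¹) (𝓝[≠] 0)
      (𝓝 ((gmat N z1 q)⁻¹ ⊗ₖ (gmat N z2 q)⁻¹)) :=
    Tendsto.kronecker tendsto_const_nhds (tendsto_nhdsWithin_of_tendsto_nhds <|
      (continuousAt_gmat_inv hN hz2 hq).tendsto.comp (tendsto_const_add_nhds_zero z2))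
  simp_rw [smul_Evtx]
  convert (hgL.mul hR).mul hgR using 2
  rw [Matrix.one_kronecker_one, Matrix.mul_one, gmat_kronecker_mul_inv hN hq hz1 hz2]

lemma tendsto_sub_smul_Evtx_nhdsNE (hN : N ≠ 0) (hq : Function.Injective q) {hb z2 : ℂ}
    (hz2 : z2 ≠ 0) (hz2hb : z2 + hb ≠ 0) :
    Tendsto (fun z1 => (z1 - z2) • Evtx N hb z1 z2 q) (𝓝[≠] z2) (𝓝 (Pmat N)) := by
  have hR : Tendsto (fun z1 => (z1 - z2) • Rsd N hb z1 z2 q) (𝓝[≠] z2) (𝓝 (Pmat N)) :=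
    tendsto_sub_smul_of_eq_inv_smul_add
      (F := fun z1 => hb⁻¹ • (1 ⊗ₖ 1) + RsdRegular N (z1 + hb) z2 q)
      (fun z1 => by rw [Rsd_eq]; abel)
      (continuousAt_const.add <| (continuousAt_RsdRegular N hz2hb z2 q).comp (x := z2)
        (continuous_add_const hb).continuousAt)
  have hgL : Tendsto (fun z1 => gmat N (z1 + hb) q ⊗ₖ gmat N z2 q) (𝓝[≠] z2)
      (𝓝 (gmat N (z2 + hb) q ⊗ₖ gmat N z2 q)) :=
    Tendsto.kronecker (tendsto_nhdsWithin_of_tendsto_nhds <|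
      ((continuous_gmat N q).comp (continuous_add_const hb)).tendsto z2) tendsto_const_nhds
  have hgR : Tendsto (fun z1 => (gmat N z1 q)⁻¹ ⊗ₖ (gmat N (z2 + hb) q)⁻¹) (𝓝[≠] z2)
      (𝓝 ((gmat N z2 q)⁻¹ ⊗ₖ (gmat N (z2 + hb) q)⁻¹)) :=
    Tendsto.kronecker (tendsto_nhdsWithin_of_tendsto_nhds <|
      (continuousAt_gmat_inv hN hz2 hq).tendsto) tendsto_const_nhds
  simp_rw [smul_Evtx]
  convert (hgL.mul hR).mul hgR using 2
  rw [kronecker_mul_Pmat, Matrix.mul_assoc, gmat_kronecker_mul_inv hN hq hz2 hz2hb,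
    Matrix.mul_one]

end GaugeLimits

/-- Proposition 4.2. Local behaviour of the gauge-transformed R-matrix:
(i) `ℏ·E(ℏ,z_1,z_2;q) → 1_N ⊗ 1_N` as `ℏ → 0` through admissible values;
(ii) `(z_1−z_2)·E(ℏ,z_1,z_2;q) → P₁₂` as `z_1 → z_2` through admissible values. -/
theorem Evtx_local_behaviour (N : ℕ) (hN : 2 ≤ N) (q : Fin N → ℂ)
    (hq : Function.Injective q) :
    (∀ z1 z2 : ℂ, z1 ≠ 0 → z2 ≠ 0 → z1 - z2 ≠ 0 →
      Filter.Tendsto (fun h : ℂ => h • Evtx N h z1 z2 q)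
        (nhdsWithin 0 {h : ℂ | Admissible N h z1 z2 q})
        (nhds ((1 : Matrix (Fin N) (Fin N) ℂ) ⊗ₖ (1 : Matrix (Fin N) (Fin N) ℂ)))) ∧
    (∀ hb z2 : ℂ, hb ≠ 0 → z2 ≠ 0 → z2 + hb ≠ 0 →
      Filter.Tendsto (fun z1 : ℂ => (z1 - z2) • Evtx N hb z1 z2 q)
        (nhdsWithin z2 {z1 : ℂ | Admissible N hb z1 z2 q})
        (nhds (Pmat N))) := by
  have hN0 : N ≠ 0 := by omega
  refine ⟨fun z1 z2 hz1 hz2 _ => ?_, fun hb z2 _ hz2 hz2hb => ?_⟩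
  · exact (tendsto_smul_Evtx_nhdsNE_zero hN0 hq hz1 hz2).mono_left
      (nhdsWithin_mono _ fun h hh => hh.2.1)
  · exact (tendsto_sub_smul_Evtx_nhdsNE hN0 hq hz2 hz2hb).mono_left
      (nhdsWithin_mono _ fun z1 hz1 => sub_ne_zero.mp hz1.2.2.2.2.1)
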